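/- arXiv:2010.13969 — 2 statements merged into one kernel-verified Lean document; each statement's English description precedes it below -/
import Mathlib

section
/- Let (G,m,w,B) be a connected weighted finite graph with boundary and let κ > 0. Suppose the Ollivier curvature of (G,m,w) is bounded below by κ, i.e., for all distinct vertices x, y and every function f : V → ℝ satisfying |f(u) − f(v)| ≤ d(u,v) for all u, v ∈ V and (f(y) − f(x))/d(y,x) = 1, one has (Δf(x) − Δf(y))/d(x,y) ≥ κ, where d is the combinatorial graph distance on G. Then the second Steklov eigenvalue satisfies σ₂ ≥ κ. -/
open Finset Real

namespace GraphSteklov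

variable {V : Type*} [Fintype V] [DecidableEq V]

/-- The weighted graph Laplacian: `Δu(x) = (1/m_x) Σ_y (u(y)-u(x)) w_{xy}`. -/
noncomputable def lap (m : V → ℝ) (w : V → V → ℝ) (u : V → ℝ) (x : V) : ℝ :=
  (1 / m x) * ∑ y, (u y - u x) * w x y

/-- Weighted inner product of two functions over a finite set `S` of vertices:
`⟨u,v⟩_S = Σ_{x ∈ S} u(x) v(x) m_x`. -/
def iprodOn (m : V → ℝ) (S : Finset V) (u v : V → ℝ) : ℝ :=
  ∑ x ∈ S, u x * v x * m x

/-- Full weighted inner product `⟨u,v⟩ = Σ_{x ∈ V} u(x) v(x) m_x`. -/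
def iprod (m : V → ℝ) (u v : V → ℝ) : ℝ := ∑ x, u x * v x * m x

/-- `(G,m,w)` is a weighted graph: positive vertex measure, symmetric edge weight,
positive exactly on edges. -/
def IsWeight (G : SimpleGraph V) (m : V → ℝ) (w : V → V → ℝ) : Prop :=
  (∀ x, 0 < m x) ∧ (∀ x y, w x y = w y x) ∧
  (∀ x y, G.Adj x y → 0 < w x y) ∧ (∀ x y, ¬ G.Adj x y → w x y = 0)

/-- `B` is a vertex-boundary of `G`: no two boundary vertices are adjacent, and every
boundary vertex is adjacent to some interior vertex. -/
def IsBoundary (G : SimpleGraph V) (B : Finset V) : Prop :=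
  (∀ x ∈ B, ∀ y ∈ B, ¬ G.Adj x y) ∧ (∀ x ∈ B, ∃ y, y ∉ B ∧ G.Adj x y)

/-- `μ` is the nondecreasing sequence of eigenvalues (with multiplicity) of `-Δ`,
witnessed by an orthonormal (w.r.t. the measure `m`) basis of eigenfunctions. -/
def IsLapSpectrum (m : V → ℝ) (w : V → V → ℝ) (μ : Fin (Fintype.card V) → ℝ) : Prop :=
  Monotone μ ∧ ∃ v : Fin (Fintype.card V) → V → ℝ,
    (∀ i x, - lap m w (v i) x = μ i * v i x) ∧
    (∀ i j, iprod m (v i) (v j) = if i = j then 1 else 0)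

/-- `σ` is the nondecreasing sequence of Steklov eigenvalues (with multiplicity) of
the Dirichlet-to-Neumann map of `(G,m,w,B)`: it is witnessed by a family of functions,
harmonic in the interior, whose restrictions to `B` are orthonormal w.r.t. `⟨·,·⟩_B`
and whose normal derivatives `∂u/∂n = -Δu` on `B` satisfy the eigenvalue equations. -/
def IsSteklovSpectrum (m : V → ℝ) (w : V → V → ℝ) (B : Finset V)
    (σ : Fin B.card → ℝ) : Prop :=
  Monotone σ ∧ ∃ u : Fin B.card → V → ℝ,
    (∀ i y, y ∉ B → lap m w (u i) y = 0) ∧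
    (∀ i x, x ∈ B → - lap m w (u i) x = σ i * u i x) ∧
    (∀ i j, iprodOn m B (u i) (u j) = if i = j then 1 else 0)

/-- `Mu2LB m w S c` says that the second smallest Laplacian eigenvalue `μ₂` of the induced
weighted graph on `S` is `≥ c`, expressed via the variational characterization
`μ₂(S) = min { ⟨du,du⟩_S / ⟨u,u⟩_S : u ≠ 0, ⟨u,1⟩_S = 0 }`. -/
def Mu2LB (m : V → ℝ) (w : V → V → ℝ) (S : Finset V) (c : ℝ) : Prop :=
  ∀ u : V → ℝ, (∑ y ∈ S, u y * m y) = 0 →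
    c * (∑ y ∈ S, u y ^ 2 * m y) ≤ (1 / 2) * ∑ x ∈ S, ∑ y ∈ S, (u y - u x) ^ 2 * w x y

/-- The carré du champ operator `Γ(f,g) = ½(Δ(fg) - fΔg - gΔf)`. -/
noncomputable def gammaOp (m : V → ℝ) (w : V → V → ℝ) (f g : V → ℝ) (x : V) : ℝ :=
  (lap m w (f * g) x - f x * lap m w g x - g x * lap m w f x) / 2

/-- The iterated carré du champ operator `Γ₂(f,f) = ½ΔΓ(f,f) - Γ(f,Δf)`. -/
noncomputable def gamma2Op (m : V → ℝ) (w : V → V → ℝ) (f : V → ℝ) (x : V) : ℝ :=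
  (lap m w (gammaOp m w f f) x) / 2 - gammaOp m w f (lap m w f) x

/-- Edge connectivity: the least number of edges whose deletion disconnects `G`. -/
noncomputable def edgeConn (G : SimpleGraph V) : ℕ :=
  sInf {n | ∃ F : Finset (Sym2 V), ↑F ⊆ G.edgeSet ∧ F.card = n ∧
    ¬ (G.deleteEdges ↑F).Connected}

/-- Vertex connectivity: the least number of vertices whose deletion disconnects `G`
(with the convention `v(K_n) = n - 1`, realized by allowing deletions leaving at most
one vertex). -/
noncomputable def vertConn (G : SimpleGraph V) : ℕ :=
  sInf {n | ∃ S : Finset V, S.card = n ∧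
    (¬ (G.induce (↑(Sᶜ : Finset V) : Set V)).Connected ∨ (Sᶜ : Finset V).card ≤ 1)}

/-- Edge weights of the weighted path on `Fin n` (vertices `0,…,n-1`), where all edges
have weight `1` except the edge incident to the vertex `0`, which has weight `lam`. -/
def pathW (lam : ℝ) {n : ℕ} (a b : Fin n) : ℝ :=
  if a.val + 1 = b.val ∨ b.val + 1 = a.val then
    (if a.val = 0 ∨ b.val = 0 then lam else 1) else 0

/-- The Laplacian (with unit vertex measure) of the weighted path `pathW lam`. -/
noncomputable def pathLap (lam : ℝ) {n : ℕ} (u : Fin n → ℝ) (a : Fin n) : ℝ :=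
  ∑ b, (u b - u a) * pathW lam a b

/-- The largest Laplacian eigenvalue of the path `P_i` on `i` vertices with unit weight. -/
noncomputable def pathTopEig (i : ℕ) : ℝ :=
  sSup {r | ∃ u : Fin i → ℝ, u ≠ 0 ∧ ∀ a, - pathLap 1 u a = r * u a}

/-- `𝒫(k,λ)`: the first Dirichlet eigenvalue of the path with vertices `0,1,…,k`, unit
vertex measure, edge weights `w_{01} = λ` and `w_{j,j+1} = 1` for `j ≥ 1`, and boundary
vertex `0`: the smallest eigenvalue of `-Δ` on functions vanishing at `0`. -/
noncomputable def pathDirichlet (k : ℕ) (lam : ℝ) : ℝ :=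
  sInf {r | ∃ u : Fin (k + 1) → ℝ, u ≠ 0 ∧ u 0 = 0 ∧
    ∀ a : Fin (k + 1), a.val ≠ 0 → - pathLap lam u a = r * u a}


/-! By min–max, a nonzero combination of the first two Steklov eigenfunctions has mean zero on
all of `V` and Dirichlet energy at most `σ₂` times its mass on `B`, hence at most `σ₂` times
its mass on `V`. Minimising the energy on the mean-zero unit sphere therefore produces a
nonconstant eigenfunction of `-Δ` with eigenvalue `μ ≤ σ₂`. Rescaled to be `1`-Lipschitz, this
eigenfunction is admissible in the curvature condition at a pair of vertices where its slope is
maximal, and there the condition reads `κ ≤ μ`. -/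

section DirichletForm

variable {V : Type*}

def massForm (m : V → ℝ) (S : Finset V) : LinearMap.BilinForm ℝ (V → ℝ) :=
  LinearMap.mk₂ ℝ (iprodOn m S)
    (fun _ _ _ => by
      simp only [iprodOn, ← sum_add_distrib]
      exact sum_congr rfl fun _ _ => by simp only [Pi.add_apply]; ring)
    (fun _ _ _ => by
      simp only [iprodOn, smul_eq_mul, mul_sum]
      exact sum_congr rfl fun _ _ => by simp only [Pi.smul_apply, smul_eq_mul]; ring)
    (fun _ _ _ => by
      simp only [iprodOn, ← sum_add_distrib]
      exact sum_congr rfl fun _ _ => by simp only [Pi.add_apply]; ring)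
    (fun _ _ _ => by
      simp only [iprodOn, smul_eq_mul, mul_sum]
      exact sum_congr rfl fun _ _ => by simp only [Pi.smul_apply, smul_eq_mul]; ring)

lemma massForm_apply (m : V → ℝ) (S : Finset V) (u v : V → ℝ) :
    massForm m S u v = iprodOn m S u v := rfl

lemma massForm_symm (m : V → ℝ) (S : Finset V) (u v : V → ℝ) :
    massForm m S u v = massForm m S v u := by
  simp only [massForm_apply, iprodOn, mul_comm (u _)]

lemma massForm_self_nonneg {m : V → ℝ} (hm : ∀ x, 0 < m x) (S : Finset V) (u : V → ℝ) :
    0 ≤ massForm m S u u :=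
  sum_nonneg fun x _ => mul_nonneg (mul_self_nonneg _) (hm x).le

lemma massForm_self_mono {m : V → ℝ} (hm : ∀ x, 0 < m x) {S T : Finset V} (hST : S ⊆ T)
    (u : V → ℝ) : massForm m S u u ≤ massForm m T u u :=
  sum_le_sum_of_subset_of_nonneg hST fun x _ _ => mul_nonneg (mul_self_nonneg _) (hm x).le

lemma eq_zero_of_massForm_self_eq_zero {m : V → ℝ} (hm : ∀ x, 0 < m x) {S : Finset V}
    {u : V → ℝ} (hu : massForm m S u u = 0) {x : V} (hx : x ∈ S) : u x = 0 := by
  have := (sum_eq_zero_iff_of_nonneg fun y _ =>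
    mul_nonneg (mul_self_nonneg (u y)) (hm y).le).mp hu x hx
  simpa [(hm x).ne'] using this

lemma massForm_self_eq_zero_of_const {m : V → ℝ} {S : Finset V} {φ : V → ℝ}
    (hconst : ∀ a b, φ a = φ b) (hφ : massForm m S φ 1 = 0) : massForm m S φ φ = 0 := by
  rcases isEmpty_or_nonempty V with _ | ⟨⟨x₀⟩⟩
  · simp [massForm_apply, iprodOn, Finset.eq_empty_of_isEmpty S]
  · have hφ' : φ = φ x₀ • (1 : V → ℝ) := funext fun x => by simp [hconst x x₀]
    have hlin : massForm m S φ φ = φ x₀ * massForm m S φ 1 := by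
      rw [← smul_eq_mul, ← map_smul, ← hφ']
    rw [hlin, hφ, mul_zero]

variable [Fintype V]

noncomputable def energy (w : V → V → ℝ) : LinearMap.BilinForm ℝ (V → ℝ) :=
  LinearMap.mk₂ ℝ (fun u v => (1 / 2) * ∑ x, ∑ y, (u y - u x) * (v y - v x) * w x y)
    (fun _ _ _ => by
      simp only [← mul_add, ← sum_add_distrib]
      exact congrArg _ <| sum_congr rfl fun _ _ => sum_congr rfl fun _ _ => by
        simp only [Pi.add_apply]; ring)
    (fun _ _ _ => by
      simp only [smul_eq_mul, mul_sum]
      exact sum_congr rfl fun _ _ => sum_congr rfl fun _ _ => by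
        simp only [Pi.smul_apply, smul_eq_mul]; ring)
    (fun _ _ _ => by
      simp only [← mul_add, ← sum_add_distrib]
      exact congrArg _ <| sum_congr rfl fun _ _ => sum_congr rfl fun _ _ => by
        simp only [Pi.add_apply]; ring)
    (fun _ _ _ => by
      simp only [smul_eq_mul, mul_sum]
      exact sum_congr rfl fun _ _ => sum_congr rfl fun _ _ => by
        simp only [Pi.smul_apply, smul_eq_mul]; ring)

lemma energy_apply (w : V → V → ℝ) (u v : V → ℝ) :
    energy w u v = (1 / 2) * ∑ x, ∑ y, (u y - u x) * (v y - v x) * w x y := rfl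

lemma energy_symm (w : V → V → ℝ) (u v : V → ℝ) : energy w u v = energy w v u := by
  simp only [energy_apply, mul_comm (u _ - u _)]

lemma energy_self_nonneg {w : V → V → ℝ} (hw : ∀ x y, 0 ≤ w x y) (u : V → ℝ) :
    0 ≤ energy w u u :=
  mul_nonneg (by norm_num) <| sum_nonneg fun x _ => sum_nonneg fun y _ =>
    mul_nonneg (mul_self_nonneg _) (hw x y)

lemma energy_one_right (w : V → V → ℝ) (u : V → ℝ) : energy w u 1 = 0 := by
  simp [energy_apply]

lemma lap_mul_measure {m : V → ℝ} (hm : ∀ x, 0 < m x) (w : V → V → ℝ) (u : V → ℝ) (x : V) :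
    lap m w u x * m x = ∑ y, (u y - u x) * w x y := by
  rw [lap, one_div, mul_comm, mul_inv_cancel_left₀ (hm x).ne']

lemma lap_smul (m : V → ℝ) (w : V → V → ℝ) (c : ℝ) (u : V → ℝ) (x : V) :
    lap m w (c • u) x = c * lap m w u x := by
  simp only [lap, Pi.smul_apply, smul_eq_mul, mul_sum, ← mul_sub]
  exact sum_congr rfl fun _ _ => by ring

lemma massForm_neg_lap_eq_energy {m : V → ℝ} {w : V → V → ℝ} (hm : ∀ x, 0 < m x)
    (hw : ∀ x y, w x y = w y x) (u g : V → ℝ) :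
    massForm m univ (-lap m w u) g = energy w u g := by
  have hswap : ∑ x, ∑ y, (u y - u x) * g y * w x y = - ∑ x, ∑ y, (u y - u x) * g x * w x y := by
    rw [sum_comm, ← sum_neg_distrib]
    refine sum_congr rfl fun x _ => ?_
    rw [← sum_neg_distrib]
    exact sum_congr rfl fun y _ => by rw [hw]; ring
  have hlap : massForm m univ (-lap m w u) g = - ∑ x, ∑ y, (u y - u x) * g x * w x y := by
    simp only [massForm_apply, iprodOn, Pi.neg_apply, ← sum_neg_distrib]
    refine sum_congr rfl fun x _ => ?_
    rw [neg_mul, neg_mul, mul_right_comm, lap_mul_measure hm, sum_mul, ← sum_neg_distrib]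
    exact sum_congr rfl fun y _ => by ring
  rw [hlap, energy_apply, ← sub_eq_zero]
  have : ∑ x, ∑ y, (u y - u x) * (g y - g x) * w x y
      = ∑ x, ∑ y, (u y - u x) * g y * w x y - ∑ x, ∑ y, (u y - u x) * g x * w x y := by
    simp only [← sum_sub_distrib]
    exact sum_congr rfl fun _ _ => sum_congr rfl fun _ _ => by ring
  rw [this, hswap]
  ring

end DirichletForm

lemma _root_.LinearMap.BilinForm.apply_eq_zero_of_nonneg_on_of_apply_self_eq_zero
    {R M : Type*} [CommRing R] [LinearOrder R] [IsStrictOrderedRing R] [AddCommGroup M]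
    [Module R M] (Q : LinearMap.BilinForm R M) (hQ : ∀ x y, Q x y = Q y x) {W : Submodule R M}
    (hnonneg : ∀ v ∈ W, 0 ≤ Q v v) {φ ψ : M} (hφ : φ ∈ W) (hψ : ψ ∈ W) (hφφ : Q φ φ = 0) :
    Q φ ψ = 0 := by
  have h := (Q.restrict W).apply_mul_apply_le_of_forall_zero_le (fun v => hnonneg v v.2)
    ⟨φ, hφ⟩ ⟨ψ, hψ⟩
  simp only [LinearMap.BilinForm.restrict_apply, LinearMap.domRestrict_apply, hφφ, zero_mul,
    hQ ψ φ] at h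
  exact mul_self_eq_zero.mp (le_antisymm h (mul_self_nonneg _))

section Eigenfunction

variable {V : Type*} [Fintype V] {m : V → ℝ} {w : V → V → ℝ}

def meanZeroSphere (m : V → ℝ) : Set (V → ℝ) :=
  {v | massForm m univ v v = 1 ∧ massForm m univ v 1 = 0}

lemma isCompact_meanZeroSphere (hm : ∀ x, 0 < m x) : IsCompact (meanZeroSphere m) := by
  have hclosed : IsClosed (meanZeroSphere m) := by
    simp only [meanZeroSphere, massForm_apply, iprodOn]
    exact (isClosed_eq (by fun_prop) continuous_const).inter
      (isClosed_eq (by fun_prop) continuous_const)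
  refine (isCompact_univ_pi fun x => isCompact_Icc (a := -√(1 / m x)) (b := √(1 / m x)))
    |>.of_isClosed_subset hclosed ?_
  rintro v ⟨hv, -⟩ x -
  refine abs_le.mp (Real.abs_le_sqrt ?_)
  rw [le_div_iff₀ (hm x), ← hv, sq]
  exact single_le_sum (f := fun y => v y * v y * m y)
    (fun y _ => mul_nonneg (mul_self_nonneg _) (hm y).le) (mem_univ x)

lemma exists_energy_minimizer (hm : ∀ x, 0 < m x) {v₀ : V → ℝ}
    (hv₀ : massForm m univ v₀ 1 = 0) (hpos : 0 < massForm m univ v₀ v₀) :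
    ∃ φ : V → ℝ, massForm m univ φ φ = 1 ∧ massForm m univ φ 1 = 0 ∧
      ∀ v, massForm m univ v 1 = 0 → energy w φ φ * massForm m univ v v ≤ energy w v v := by
  have hunit : ∀ v, massForm m univ v 1 = 0 → 0 < massForm m univ v v →
      (√(massForm m univ v v))⁻¹ • v ∈ meanZeroSphere m := by
    intro v hv hvpos
    refine ⟨?_, by simp [hv]⟩
    simp only [map_smul, LinearMap.smul_apply, smul_eq_mul, ← mul_assoc, ← mul_inv,
      Real.mul_self_sqrt hvpos.le]
    exact inv_mul_cancel₀ hvpos.ne'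
  have hcont : Continuous fun v : V → ℝ => energy w v v := by
    simp only [energy_apply]
    fun_prop
  obtain ⟨φ, ⟨hφ1, hφ0⟩, hmin⟩ :=
    (isCompact_meanZeroSphere hm).exists_isMinOn ⟨_, hunit v₀ hv₀ hpos⟩ hcont.continuousOn
  refine ⟨φ, hφ1, hφ0, fun v hv => ?_⟩
  rcases (massForm_self_nonneg hm univ v).eq_or_lt with hzero | hvpos
  · have : v = 0 := funext fun x => eq_zero_of_massForm_self_eq_zero hm hzero.symm (mem_univ x)
    simp [this]
  · have hle : energy w φ φ ≤ energy w ((√(massForm m univ v v))⁻¹ • v)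
        ((√(massForm m univ v v))⁻¹ • v) := hmin (hunit v hv hvpos)
    simp only [map_smul, LinearMap.smul_apply, smul_eq_mul, ← mul_assoc,
      ← mul_inv, Real.mul_self_sqrt hvpos.le] at hle
    rwa [le_inv_mul_iff₀ hvpos, mul_comm] at hle

theorem exists_lap_eigenfunction_le_rayleigh (hm : ∀ x, 0 < m x) (hw : ∀ x y, w x y = w y x)
    {v₀ : V → ℝ} (hv₀ : massForm m univ v₀ 1 = 0) (hpos : 0 < massForm m univ v₀ v₀) :
    ∃ (μ : ℝ) (φ : V → ℝ), (∀ x, -lap m w φ x = μ * φ x) ∧ (∃ a b, φ a ≠ φ b) ∧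
      μ * massForm m univ v₀ v₀ ≤ energy w v₀ v₀ := by
  obtain ⟨φ, hφ1, hφ0, hmin⟩ := exists_energy_minimizer (w := w) hm hv₀ hpos
  set μ := energy w φ φ
  set Q := energy w - μ • massForm m univ
  have hQ : ∀ u v, Q u v = Q v u := fun u v => by
    simp only [Q, LinearMap.BilinForm.sub_apply, LinearMap.smul_apply, energy_symm w u,
      massForm_symm m univ u]
  let W := LinearMap.ker ((massForm m univ).flip 1)
  have hEL : ∀ ψ ∈ W, Q φ ψ = 0 := fun ψ hψ =>
    Q.apply_eq_zero_of_nonneg_on_of_apply_self_eq_zero hQ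
      (fun v hv => by simpa [Q] using hmin v hv) hφ0 hψ (by simp [Q, μ, hφ1])
  set ξ := -lap m w φ - μ • φ
  have hξ : ∀ ψ, massForm m univ ξ ψ = Q φ ψ := fun ψ => by
    simp [ξ, Q, ← massForm_neg_lap_eq_energy hm hw]
  have hξW : ξ ∈ W := by simp [W, hξ, Q, hφ0, energy_one_right]
  have hξ0 : ∀ x, ξ x = 0 := fun x =>
    eq_zero_of_massForm_self_eq_zero hm ((hξ ξ).trans (hEL ξ hξW)) (mem_univ x)
  refine ⟨μ, φ, fun x => ?_, ?_, hmin v₀ hv₀⟩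
  · simpa [ξ, sub_eq_zero] using hξ0 x
  · by_contra! hconst
    simp [massForm_self_eq_zero_of_const hconst hφ0] at hφ1

end Eigenfunction

section Lichnerowicz

variable {V : Type*} [Fintype V] {G : SimpleGraph V}

lemma exists_max_slope (hG : G.Connected) {φ : V → ℝ} (hφ : ∃ a b, φ a ≠ φ b) :
    ∃ x y, x ≠ y ∧ ∃ L > 0, φ y - φ x = L * G.dist x y ∧
      ∀ p q, |φ p - φ q| ≤ L * G.dist p q := by
  classical
  obtain ⟨a, b, hab⟩ := hφ
  have hdist : ∀ {p q : V}, p ≠ q → (0 : ℝ) < G.dist p q := fun h => mod_cast hG.pos_dist_of_ne h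
  let slope : V × V → ℝ := fun p => (φ p.2 - φ p.1) / G.dist p.1 p.2
  obtain ⟨⟨x, y⟩, hxy, hmax⟩ := (univ.filter fun p : V × V => p.1 ≠ p.2).exists_max_image slope
    ⟨(a, b), by simpa using fun h => hab (congrArg φ h)⟩
  simp only [mem_filter, mem_univ, true_and] at hxy hmax
  set L := slope (x, y)
  have hle : ∀ p q, φ q - φ p ≤ L * G.dist p q := fun p q => by
    rcases eq_or_ne p q with rfl | hpq
    · simp
    · exact (div_le_iff₀ (hdist hpq)).mp (hmax (p, q) hpq)
  have habs : ∀ p q, |φ p - φ q| ≤ L * G.dist p q := fun p q =>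
    abs_sub_le_iff.mpr ⟨G.dist_comm ▸ hle q p, hle p q⟩
  refine ⟨x, y, hxy, L, ?_, (div_mul_cancel₀ _ (hdist hxy).ne').symm, habs⟩
  have hpos : 0 < L * G.dist a b :=
    (abs_pos.mpr (sub_ne_zero.mpr hab)).trans_le (habs a b)
  exact pos_of_mul_pos_left hpos (hdist (fun h => hab (congrArg φ h))).le

theorem le_eigenvalue_of_ollivier_curvature (hG : G.Connected) {m : V → ℝ} {w : V → V → ℝ}
    {κ : ℝ} (hcurv : ∀ x y : V, x ≠ y → ∀ f : V → ℝ,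
      (∀ u v : V, |f u - f v| ≤ (G.dist u v : ℝ)) →
      (f y - f x) / (G.dist y x : ℝ) = 1 →
      κ ≤ (lap m w f x - lap m w f y) / (G.dist x y : ℝ))
    {μ : ℝ} {φ : V → ℝ} (heig : ∀ x, -lap m w φ x = μ * φ x) (hφ : ∃ a b, φ a ≠ φ b) :
    κ ≤ μ := by
  obtain ⟨x, y, hxy, L, hL, hslope, hlip⟩ := exists_max_slope hG hφ
  have hd : (G.dist x y : ℝ) ≠ 0 := mod_cast (hG.pos_dist_of_ne hxy).ne'
  have hcurv' := hcurv x y hxy (L⁻¹ • φ) (fun u v => ?_) ?_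
  · simp only [lap_smul] at hcurv'
    convert hcurv' using 1
    have hlap : ∀ z, lap m w φ z = -(μ * φ z) := fun z => by rw [← heig, neg_neg]
    rw [hlap, hlap]
    field_simp
    linear_combination -μ * hslope
  · rw [Pi.smul_apply, Pi.smul_apply, smul_eq_mul, smul_eq_mul, ← mul_sub, abs_mul,
      abs_of_pos (inv_pos.mpr hL), inv_mul_le_iff₀ hL]
    exact hlip u v
  · rw [G.dist_comm, Pi.smul_apply, Pi.smul_apply, smul_eq_mul, smul_eq_mul, ← mul_sub, hslope]
    field_simp

end Lichnerowicz

lemma IsWeight.weight_nonneg {V : Type*} {G : SimpleGraph V} {m : V → ℝ} {w : V → V → ℝ}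
    (hW : IsWeight G m w) (x y : V) : 0 ≤ w x y := by
  by_cases h : G.Adj x y
  exacts [(hW.2.2.1 x y h).le, (hW.2.2.2 x y h).ge]

section Steklov

variable {V : Type*} [Fintype V] {m : V → ℝ} {w : V → V → ℝ} {B : Finset V}

lemma energy_eq_of_steklov (hm : ∀ x, 0 < m x) (hw : ∀ x y, w x y = w y x) {u : V → ℝ} {σ : ℝ}
    (hharm : ∀ y, y ∉ B → lap m w u y = 0) (heig : ∀ x, x ∈ B → -lap m w u x = σ * u x)
    (g : V → ℝ) : energy w u g = σ * massForm m B u g := by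
  rw [← massForm_neg_lap_eq_energy hm hw, massForm_apply, massForm_apply, iprodOn, iprodOn,
    mul_sum, ← sum_subset (subset_univ B) fun y _ hy => by simp [hharm y hy]]
  exact sum_congr rfl fun x hx => by rw [Pi.neg_apply, heig x hx]; ring

lemma exists_rayleigh_le_second_steklov (hm : ∀ x, 0 < m x) (hw : ∀ x y, w x y = w y x)
    (hw0 : ∀ x y, 0 ≤ w x y) {σ : Fin B.card → ℝ} (hσ : IsSteklovSpectrum m w B σ)
    (hB2 : 1 < B.card) :
    ∃ v : V → ℝ, massForm m univ v 1 = 0 ∧ 0 < massForm m univ v v ∧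
      energy w v v ≤ σ ⟨1, hB2⟩ * massForm m univ v v := by
  obtain ⟨hmono, u, hharm, heig, horth⟩ := hσ
  set i₀ : Fin B.card := ⟨0, by omega⟩
  set i₁ : Fin B.card := ⟨1, hB2⟩
  have hne : i₀ ≠ i₁ := by simp [i₀, i₁, Fin.ext_iff]
  have hE : ∀ i g, energy w (u i) g = σ i * massForm m B (u i) g := fun i =>
    energy_eq_of_steklov hm hw (hharm i) (heig i)
  have horth' : ∀ i j, massForm m B (u i) (u j) = if i = j then 1 else 0 := horth
  have hσ₁ : 0 ≤ σ i₁ := by simpa [hE, horth'] using energy_self_nonneg hw0 (u i₁)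
  have hσ₀₁ : σ i₀ ≤ σ i₁ := hmono (Fin.mk_le_mk.mpr zero_le_one)
  obtain ⟨α, β, hαβ, hmean⟩ : ∃ α β : ℝ, (α ≠ 0 ∨ β ≠ 0) ∧
      α * massForm m univ (u i₀) 1 + β * massForm m univ (u i₁) 1 = 0 := by
    by_cases h : massForm m univ (u i₁) 1 = 0
    · exact ⟨0, 1, Or.inr one_ne_zero, by simp [h]⟩
    · exact ⟨massForm m univ (u i₁) 1, -massForm m univ (u i₀) 1, Or.inl h, by ring⟩
  set v := α • u i₀ + β • u i₁
  have hvB : massForm m B v v = α ^ 2 + β ^ 2 := by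
    simp only [v, map_add, map_smul, LinearMap.add_apply, LinearMap.smul_apply, smul_eq_mul,
      horth', if_pos, if_neg hne, if_neg hne.symm]
    ring
  have hvE : energy w v v = α ^ 2 * σ i₀ + β ^ 2 * σ i₁ := by
    simp only [v, map_add, map_smul, LinearMap.add_apply, LinearMap.smul_apply, smul_eq_mul,
      hE, horth', if_pos, if_neg hne, if_neg hne.symm]
    ring
  have hpos : 0 < α ^ 2 + β ^ 2 := by
    rcases hαβ with h | h <;> positivity
  have hvV := massForm_self_mono hm (subset_univ B) v
  refine ⟨v, by simpa [v] using hmean, by linarith, ?_⟩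
  calc energy w v v = α ^ 2 * σ i₀ + β ^ 2 * σ i₁ := hvE
    _ ≤ σ i₁ * massForm m B v v := by rw [hvB]; nlinarith [sq_nonneg α]
    _ ≤ σ i₁ * massForm m univ v v := mul_le_mul_of_nonneg_left hvV hσ₁

end Steklov

theorem lichnerowicz_ollivier_steklov_general
    {V : Type*} [Fintype V]
    (G : SimpleGraph V) (m : V → ℝ) (w : V → V → ℝ) (B : Finset V)
    (hG : G.Connected) (hW : IsWeight G m w)
    (κ : ℝ)
    (hcurv : ∀ x y : V, x ≠ y → ∀ f : V → ℝ,
      (∀ u v : V, |f u - f v| ≤ (G.dist u v : ℝ)) →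
      (f y - f x) / (G.dist y x : ℝ) = 1 →
      κ ≤ (lap m w f x - lap m w f y) / (G.dist x y : ℝ))
    (σ : Fin B.card → ℝ) (hσ : IsSteklovSpectrum m w B σ)
    (hB2 : 1 < B.card) :
    κ ≤ σ ⟨1, hB2⟩ := by
  obtain ⟨v, hv, hvpos, hvσ⟩ :=
    exists_rayleigh_le_second_steklov hW.1 hW.2.1 hW.weight_nonneg hσ hB2
  obtain ⟨μ, φ, heig, hφ, hμ⟩ := exists_lap_eigenfunction_le_rayleigh hW.1 hW.2.1 hv hvpos
  have hκμ : κ ≤ μ := le_eigenvalue_of_ollivier_curvature hG hcurv heig hφ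
  have hμσ : μ ≤ σ ⟨1, hB2⟩ := le_of_mul_le_mul_right (hμ.trans hvσ) hvpos
  exact hκμ.trans hμσ

/-- Lichnerowicz estimate for the Steklov eigenvalue with respect to
Ollivier curvature: if the Ollivier curvature (in the Münch–Wojciechowski formulation)
of a connected weighted finite graph with boundary `(G,m,w,B)` is bounded below by
`κ > 0`, then `σ₂ ≥ κ`. -/
theorem lichnerowicz_ollivier_steklov
    {V : Type*} [Fintype V] [DecidableEq V]
    (G : SimpleGraph V) (m : V → ℝ) (w : V → V → ℝ) (B : Finset V)
    (hG : G.Connected) (hW : IsWeight G m w) (hB : IsBoundary G B)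
    (κ : ℝ) (hκ : 0 < κ)
    (hcurv : ∀ x y : V, x ≠ y → ∀ f : V → ℝ,
      (∀ u v : V, |f u - f v| ≤ (G.dist u v : ℝ)) →
      (f y - f x) / (G.dist y x : ℝ) = 1 →
      κ ≤ (lap m w f x - lap m w f y) / (G.dist x y : ℝ))
    (σ : Fin B.card → ℝ) (hσ : IsSteklovSpectrum m w B σ)
    (hB2 : 1 < B.card) :
    κ ≤ σ ⟨1, hB2⟩ :=
  lichnerowicz_ollivier_steklov_general G m w B hG hW κ hcurv σ hσ hB2

end GraphSteklov
end

section
/- Let (G,m,w,B) be a connected weighted finite graph with boundary with |B| ≥ 2, and suppose there is a nonnegative function ρ : Ω → ℝ such that w_{xy} = ρ_y m_x m_y for every x ∈ B and y ∈ Ω; set Deg := ⟨ρ,1⟩_Ω. Then for every f : B → ℝ with ⟨f,1⟩_B = 0, the harmonic extension u_f vanishes identically on Ω and Λf = Deg · f. Consequently σ₂ = σ₃ = ⋯ = σ_{|B|} = Deg. -/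
/-!
For mean-zero boundary data, the boundary neighbours of an interior vertex `y` contribute
`-ρ_y m_y ⟨1,1⟩_B u_y` to `m_y Δu(y)`, so on the interior graph harmonicity reads
`-Δ_Ω u + ρ ⟨1,1⟩_B u = 0`. By Green's identity the nonnegative potential term
`Σ_y ρ_y m_y ⟨1,1⟩_B u_y²` equals minus the interior Dirichlet energy, so both vanish: `u` is
constant along interior edges and zero at interior vertices adjacent to `B`, hence zero on `Ω`
by connectivity, and then `Λf = Deg f` is read off directly.

Hence `Λ = Deg (I - P)` with `P` the `⟨·,·⟩_B`-projection onto constants: a Steklov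
eigenfunction has eigenvalue `Deg` or is constant on `B` with eigenvalue `0`, and an
orthonormal family contains at most one constant.
-/


open Finset Real

namespace GraphSteklov

variable {V : Type*} [Fintype V] [DecidableEq V]

theorem _root_.SimpleGraph.Reachable.of_adj_imp {V : Type*} {G : SimpleGraph V} {P : V → Prop}
    (hP : ∀ a b, G.Adj a b → P b → P a) {x y : V} (h : G.Reachable x y) (hy : P y) : P x := by
  obtain ⟨p⟩ := h
  induction p with
  | nil => exact hy
  | cons hadj _ ih => exact hP _ _ hadj (ih hy)

section Weights

variable {V : Type*} {m : V → ℝ} {w : V → V → ℝ}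

theorem IsWeight.nonneg {G : SimpleGraph V} (hW : IsWeight G m w) (x y : V) : 0 ≤ w x y := by
  by_cases h : G.Adj x y
  · exact (hW.2.2.1 x y h).le
  · exact (hW.2.2.2 x y h).ge

theorem sum_mul_sum_sub_mul_eq_neg_half_sum_sq_mul (hw : ∀ x y, w x y = w y x)
    (S : Finset V) (u : V → ℝ) :
    ∑ y ∈ S, u y * ∑ z ∈ S, (u z - u y) * w y z
      = -(1 / 2) * ∑ y ∈ S, ∑ z ∈ S, (u z - u y) ^ 2 * w y z := by
  have hswap : ∑ y ∈ S, ∑ z ∈ S, u y * ((u z - u y) * w y z)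
      = ∑ y ∈ S, ∑ z ∈ S, u z * ((u y - u z) * w y z) := by
    rw [sum_comm]
    exact sum_congr rfl fun y _ => sum_congr rfl fun z _ => by rw [hw]
  have hsum : ∑ y ∈ S, ∑ z ∈ S, (u y * ((u z - u y) * w y z) + u z * ((u y - u z) * w y z))
      = -∑ y ∈ S, ∑ z ∈ S, (u z - u y) ^ 2 * w y z := by
    simp only [← sum_neg_distrib]
    exact sum_congr rfl fun y _ => sum_congr rfl fun z _ => by ring
  have hlhs : ∑ y ∈ S, u y * ∑ z ∈ S, (u z - u y) * w y z
      = ∑ y ∈ S, ∑ z ∈ S, u y * ((u z - u y) * w y z) := by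
    simp only [mul_sum]
  simp only [sum_add_distrib] at hsum
  linarith

theorem sum_sub_div_mul_eq_zero (B : Finset V) (v : V → ℝ) (hM : ∑ x ∈ B, m x ≠ 0) :
    ∑ x ∈ B, (v x - (∑ x ∈ B, v x * m x) / ∑ x ∈ B, m x) * m x = 0 := by
  simp only [sub_mul, sum_sub_distrib, ← mul_sum, div_mul_cancel₀ _ hM, sub_self]

theorem iprodOn_of_eqOn_const {B : Finset V} {u v : V → ℝ} {a b : ℝ}
    (hu : ∀ x ∈ B, u x = a) (hv : ∀ x ∈ B, v x = b) :
    iprodOn m B u v = a * b * ∑ x ∈ B, m x := by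
  rw [iprodOn, mul_sum]
  exact sum_congr rfl fun x hx => by rw [hu x hx, hv x hx]

end Weights

section Laplacian

variable {V : Type*} [Fintype V] {m : V → ℝ} {w : V → V → ℝ}

theorem lap_eq_zero_iff {u : V → ℝ} {x : V} (hm : m x ≠ 0) :
    lap m w u x = 0 ↔ ∑ y, (u y - u x) * w x y = 0 := by
  simp [lap, hm]

theorem lap_sub_const (u : V → ℝ) (c : ℝ) : lap m w (fun x => u x - c) = lap m w u := by
  funext x
  simp only [lap, sub_sub_sub_cancel_right]

end Laplacian

section SplitWeight

variable {V : Type*} [Fintype V] [DecidableEq V] {G : SimpleGraph V} {m : V → ℝ}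
  {w : V → V → ℝ} {B : Finset V} {ρ : V → ℝ} {u : V → ℝ}

theorem sum_compl_sub_mul_eq_of_lap_eq_zero {y : V} (hm : m y ≠ 0)
    (hsym : ∀ x y, w x y = w y x) (hsplit : ∀ x ∈ B, ∀ y, y ∉ B → w x y = ρ y * m x * m y)
    (hy : y ∉ B) (hharm : lap m w u y = 0) (hmean : ∑ x ∈ B, u x * m x = 0) :
    ∑ z ∈ Bᶜ, (u z - u y) * w y z = ρ y * m y * (∑ x ∈ B, m x) * u y := by
  have hbdry : ∑ z ∈ B, (u z - u y) * w y z = -(ρ y * m y * (∑ x ∈ B, m x) * u y) := by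
    calc ∑ z ∈ B, (u z - u y) * w y z
        = ρ y * m y * ∑ z ∈ B, u z * m z - ρ y * m y * (∑ x ∈ B, m x) * u y := by
          simp only [mul_sum, sum_mul, ← sum_sub_distrib]
          refine sum_congr rfl fun z hz => ?_
          rw [hsym, hsplit z hz y hy]
          ring
      _ = _ := by rw [hmean]; ring
  have htot := sum_add_sum_compl B fun z => (u z - u y) * w y z
  rw [(lap_eq_zero_iff hm).1 hharm, hbdry] at htot
  linarith

theorem potential_and_gradient_eq_zero_of_lap_eq_zero (hW : IsWeight G m w)
    (hρ : ∀ y, y ∉ B → 0 ≤ ρ y) (hsplit : ∀ x ∈ B, ∀ y, y ∉ B → w x y = ρ y * m x * m y)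
    (hharm : ∀ y, y ∉ B → lap m w u y = 0) (hmean : ∑ x ∈ B, u x * m x = 0) :
    (∀ y ∈ Bᶜ, ρ y * m y * (∑ x ∈ B, m x) * u y ^ 2 = 0) ∧
      ∀ y ∈ Bᶜ, ∑ z ∈ Bᶜ, (u z - u y) ^ 2 * w y z = 0 := by
  have hpot_nonneg : ∀ y ∈ Bᶜ, 0 ≤ ρ y * m y * (∑ x ∈ B, m x) * u y ^ 2 := fun y hy => by
    have := hρ y (mem_compl.1 hy)
    have := hW.1 y
    have : 0 ≤ ∑ x ∈ B, m x := sum_nonneg fun x _ => (hW.1 x).le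
    positivity
  have hgrad_nonneg : ∀ y ∈ Bᶜ, 0 ≤ ∑ z ∈ Bᶜ, (u z - u y) ^ 2 * w y z := fun y _ =>
    sum_nonneg fun z _ => mul_nonneg (sq_nonneg _) (hW.nonneg y z)
  have henergy : ∑ y ∈ Bᶜ, ρ y * m y * (∑ x ∈ B, m x) * u y ^ 2
      = -(1 / 2) * ∑ y ∈ Bᶜ, ∑ z ∈ Bᶜ, (u z - u y) ^ 2 * w y z := by
    rw [← sum_mul_sum_sub_mul_eq_neg_half_sum_sq_mul hW.2.1]
    refine sum_congr rfl fun y hy => ?_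
    rw [sum_compl_sub_mul_eq_of_lap_eq_zero (hW.1 y).ne' hW.2.1 hsplit (mem_compl.1 hy)
      (hharm y (mem_compl.1 hy)) hmean]
    ring
  constructor
  · exact (sum_eq_zero_iff_of_nonneg hpot_nonneg).1 <| by
      linarith [sum_nonneg hpot_nonneg, sum_nonneg hgrad_nonneg]
  · exact (sum_eq_zero_iff_of_nonneg hgrad_nonneg).1 <| by
      linarith [sum_nonneg hpot_nonneg, sum_nonneg hgrad_nonneg]

theorem eq_zero_of_notMem_of_lap_eq_zero (hG : G.Connected) (hW : IsWeight G m w)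
    (hBne : B.Nonempty) (hρ : ∀ y, y ∉ B → 0 ≤ ρ y)
    (hsplit : ∀ x ∈ B, ∀ y, y ∉ B → w x y = ρ y * m x * m y)
    (hharm : ∀ y, y ∉ B → lap m w u y = 0) (hmean : ∑ x ∈ B, u x * m x = 0) :
    ∀ y, y ∉ B → u y = 0 := by
  obtain ⟨hpot, hgrad⟩ := potential_and_gradient_eq_zero_of_lap_eq_zero hW hρ hsplit hharm hmean
  have hw := hW.nonneg
  obtain ⟨hm, hsym, hpos, -⟩ := hW
  have hM : 0 < ∑ x ∈ B, m x := sum_pos (fun x _ => hm x) hBne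
  obtain ⟨x₀, hx₀⟩ := hBne
  intro y hy
  refine (hG.preconnected y x₀).of_adj_imp (P := fun a => a ∉ B → u a = 0) ?_
    (fun h => absurd hx₀ h) hy
  intro a b hab hb ha
  by_cases hbB : b ∈ B
  · have hρa : 0 < ρ a := by
      have := hpos a b hab
      rw [hsym, hsplit b hbB a ha] at this
      exact pos_of_mul_pos_left (pos_of_mul_pos_left this (hm a).le) (hm b).le
    have hcoef : ρ a * m a * ∑ x ∈ B, m x ≠ 0 := by have := hm a; positivity
    simpa [hcoef] using hpot a (mem_compl.2 ha)
  · have := (sum_eq_zero_iff_of_nonneg fun z _ =>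
      mul_nonneg (sq_nonneg _) (hw a z)).1 (hgrad a (mem_compl.2 ha)) b (mem_compl.2 hbB)
    rw [mul_eq_zero, sq_eq_zero_iff, sub_eq_zero] at this
    rcases this with h | h
    · rw [← h]; exact hb hbB
    · exact absurd h (hpos a b hab).ne'

theorem neg_lap_eq_of_eq_zero_of_notMem (hW : IsWeight G m w) (hB : IsBoundary G B)
    (hsplit : ∀ x ∈ B, ∀ y, y ∉ B → w x y = ρ y * m x * m y) (hu : ∀ y, y ∉ B → u y = 0)
    {x : V} (hx : x ∈ B) :
    - lap m w u x = (∑ y ∈ Bᶜ, ρ y * m y) * u x := by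
  have hbdry : ∑ z ∈ B, (u z - u x) * w x z = 0 :=
    sum_eq_zero fun z hz => by rw [hW.2.2.2 x z (hB.1 x hx z hz), mul_zero]
  have hint : ∑ z ∈ Bᶜ, (u z - u x) * w x z = -((∑ y ∈ Bᶜ, ρ y * m y) * u x * m x) := by
    rw [sum_mul, sum_mul, ← sum_neg_distrib]
    refine sum_congr rfl fun z hz => ?_
    rw [hu z (mem_compl.1 hz), hsplit x hx z (mem_compl.1 hz)]
    ring
  rw [lap, ← sum_add_sum_compl B, hbdry, hint, zero_add]
  field_simp [(hW.1 x).ne']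

theorem steklov_eigenvalue_eq_or_eqOn_const (hG : G.Connected) (hW : IsWeight G m w)
    (hB : IsBoundary G B) (hBne : B.Nonempty) (hρ : ∀ y, y ∉ B → 0 ≤ ρ y)
    (hsplit : ∀ x ∈ B, ∀ y, y ∉ B → w x y = ρ y * m x * m y) {σ : ℝ}
    (hharm : ∀ y, y ∉ B → lap m w u y = 0) (heig : ∀ x ∈ B, - lap m w u x = σ * u x)
    (hnorm : iprodOn m B u u = 1) :
    σ = ∑ y ∈ Bᶜ, ρ y * m y ∨ σ = 0 ∧ ∃ c, ∀ x ∈ B, u x = c := by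
  set Deg := ∑ y ∈ Bᶜ, ρ y * m y
  have hM : ∑ x ∈ B, m x ≠ 0 := (sum_pos (fun x _ => hW.1 x) hBne).ne'
  set c := (∑ x ∈ B, u x * m x) / ∑ x ∈ B, m x
  have hu' : ∀ y, y ∉ B → lap m w (fun x => u x - c) y = 0 := by
    simpa only [lap_sub_const] using hharm
  have hvanish := eq_zero_of_notMem_of_lap_eq_zero hG hW hBne hρ hsplit hu'
    (sum_sub_div_mul_eq_zero B u hM)
  have key : ∀ x ∈ B, σ * u x = Deg * (u x - c) := fun x hx => by
    rw [← heig x hx, ← neg_lap_eq_of_eq_zero_of_notMem hW hB hsplit hvanish hx, lap_sub_const]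
  by_cases hσ : σ = Deg
  · exact Or.inl hσ
  obtain ⟨x₀, hx₀⟩ := hBne
  have hconst : ∀ x ∈ B, u x = u x₀ := fun x hx => by
    have : (σ - Deg) * (u x - u x₀) = 0 := by linarith [key x hx, key x₀ hx₀]
    exact sub_eq_zero.1 ((mul_eq_zero.1 this).resolve_left (sub_ne_zero.2 hσ))
  have hc : c = u x₀ := by
    rw [div_eq_iff hM, mul_sum]
    exact sum_congr rfl fun x hx => by rw [hconst x hx, mul_comm]
  have hux₀ : u x₀ ≠ 0 := fun h => by
    rw [iprodOn_of_eqOn_const hconst hconst, h] at hnorm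
    simp at hnorm
  refine Or.inr ⟨?_, u x₀, hconst⟩
  have := key x₀ hx₀
  rw [hc, sub_self, mul_zero] at this
  exact (mul_eq_zero.1 this).resolve_right hux₀

end SplitWeight

/-- If `|B| ≥ 2` and `w_{xy} = ρ_y m_x m_y` for all `x ∈ B`, `y ∈ Ω`
with `ρ ≥ 0` on `Ω = V \ B`, then for every boundary datum `f` with `⟨f,1⟩_B = 0` the
harmonic extension `u_f` vanishes on `Ω` and `Λf = Deg · f` where `Deg = ⟨ρ,1⟩_Ω`;
consequently `σ₂ = σ₃ = ⋯ = σ_{|B|} = Deg`. (Here a harmonic extension is written as a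
function `u : V → ℝ` with `Δu = 0` on `Ω`, the boundary datum being `u|_B`, and
`Λ(u|_B) = -Δu` on `B`.) -/
theorem split_weight_steklov_spectrum
    {V : Type*} [Fintype V] [DecidableEq V]
    (G : SimpleGraph V) (m : V → ℝ) (w : V → V → ℝ) (B : Finset V)
    (hG : G.Connected) (hW : IsWeight G m w) (hB : IsBoundary G B)
    (hB2 : 2 ≤ B.card)
    (ρ : V → ℝ) (hρ : ∀ y, y ∉ B → 0 ≤ ρ y)
    (hsplit : ∀ x ∈ B, ∀ y, y ∉ B → w x y = ρ y * m x * m y) :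
    (∀ u : V → ℝ, (∀ y, y ∉ B → lap m w u y = 0) →
      (∑ x ∈ B, u x * m x) = 0 →
      (∀ y, y ∉ B → u y = 0) ∧
      (∀ x ∈ B, - lap m w u x = (∑ y ∈ Bᶜ, ρ y * m y) * u x)) ∧
    (∀ σ : Fin B.card → ℝ, IsSteklovSpectrum m w B σ →
      ∀ i : Fin B.card, 1 ≤ i.val → σ i = ∑ y ∈ Bᶜ, ρ y * m y) := by
  have hBne : B.Nonempty := card_pos.1 (by omega)
  have hDeg : 0 ≤ ∑ y ∈ Bᶜ, ρ y * m y :=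
    sum_nonneg fun y hy => mul_nonneg (hρ y (mem_compl.1 hy)) (hW.1 y).le
  refine ⟨fun u hharm hmean => ?_, ?_⟩
  · have hu := eq_zero_of_notMem_of_lap_eq_zero hG hW hBne hρ hsplit hharm hmean
    exact ⟨hu, fun x hx => neg_lap_eq_of_eq_zero_of_notMem hW hB hsplit hu hx⟩
  rintro σ ⟨hmono, v, hharm, heig, horth⟩ i hi
  have hcases := fun j => steklov_eigenvalue_eq_or_eqOn_const hG hW hB hBne hρ hsplit
    (hharm j) (heig j) (by simpa using horth j j)
  by_contra hne
  obtain ⟨hσi, ci, hci⟩ := (hcases i).resolve_left hne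
  let j₀ : Fin B.card := ⟨0, by omega⟩
  have hij₀ : i ≠ j₀ := fun h => by simp [h, j₀] at hi
  rcases hcases j₀ with hσ₀ | ⟨-, c₀, hc₀⟩
  · have : σ j₀ ≤ σ i := hmono (Fin.mk_le_mk.2 (Nat.zero_le _))
    exact hne (by linarith)
  · have hnorm := horth i i
    have horth₀ := horth i j₀
    rw [iprodOn_of_eqOn_const hci hci, if_pos rfl] at hnorm
    rw [iprodOn_of_eqOn_const hci hc₀, if_neg hij₀] at horth₀
    have hc₀_zero : c₀ = 0 := by linear_combination ci * horth₀ - c₀ * hnorm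
    have hnorm₀ := horth j₀ j₀
    rw [iprodOn_of_eqOn_const hc₀ hc₀, if_pos rfl, hc₀_zero] at hnorm₀
    simp at hnorm₀

end GraphSteklov
end
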